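/- Let f(s,t) = (1/4)(s/t + 2 + t/s). Suppose sequences (sₙ), (tₙ) of reals with sₙ, tₙ ≥ 1 satisfy s_{n+1} = f(sₙ, tₙ) and tₙ → 1. Then sₙ → 1. -/

import Mathlib

noncomputable def f (s t : ℝ) : ℝ := (1 / 4) * (s / t + 2 + t / s)

lemma f_key (s t : ℝ) (hs : 1 ≤ s) (ht : 1 ≤ t) :
    f s t - 1 ≤ (s - 1) / 4 + (t - 1) ^ 2 / 4 := by
  have hs0 : 0 < s := by linarith
  have ht0 : 0 < t := by linarith
  have h1 : f s t - 1 = (s - t) ^ 2 / (4 * s * t) := by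
    rw [f]; field_simp; ring
  rw [h1, div_le_iff₀ (by positivity)]
  rcases le_total t s with h | h
  · nlinarith [mul_pos hs0 ht0, sq_nonneg (s - t), sq_nonneg (t - 1),
      mul_nonneg (mul_nonneg (sub_nonneg.2 h) hs0.le) ht0.le]
  · have h2 : (s - t) ^ 2 ≤ (t - 1) ^ 2 := by nlinarith
    have h3 : (t - 1) ^ 2 ≤ (t - 1) ^ 2 * (s * t) := by nlinarith [mul_nonneg (sq_nonneg (t - 1)) (show (0:ℝ) ≤ s * t - 1 by nlinarith)]
    nlinarith [mul_nonneg (mul_nonneg (sub_nonneg.2 hs) hs0.le) ht0.le]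

theorem stmt6 (s t : ℕ → ℝ) (hs : ∀ n, 1 ≤ s n) (ht : ∀ n, 1 ≤ t n)
    (hrec : ∀ n, s (n + 1) = f (s n) (t n))
    (htlim : Filter.Tendsto t Filter.atTop (nhds 1)) :
    Filter.Tendsto s Filter.atTop (nhds 1) := by
  have key : ∀ n, s (n + 1) - 1 ≤ (s n - 1) / 4 + (t n - 1) ^ 2 / 4 := by
    intro n; rw [hrec n]; exact f_key _ _ (hs n) (ht n)
  have hconv : Filter.Tendsto (fun n => s n - 1) Filter.atTop (nhds 0) := by
    rw [Metric.tendsto_atTop]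
    intro ε hε
    have htsq : Filter.Tendsto (fun n => (t n - 1) ^ 2) Filter.atTop (nhds 0) := by
      have := (htlim.sub (tendsto_const_nhds (x := (1:ℝ)))).pow 2
      simpa using this
    obtain ⟨N, hN⟩ := Filter.eventually_atTop.mp
      (htsq.eventually_lt_const (show (0:ℝ) < ε by linarith))
    have claim : ∀ k, s (N + k) - 1 ≤ (s N - 1) * (1 / 4) ^ k + ε / 3 := by
      intro k
      induction k with
      | zero => simp; linarith
      | succ k ih =>
        have h1 : s (N + k + 1) - 1 ≤ (s (N + k) - 1) / 4 + (t (N + k) - 1) ^ 2 / 4 :=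
          key (N + k)
        have h2 : (t (N + k) - 1) ^ 2 < ε := hN (N + k) (Nat.le_add_right N k)
        have h3 : ((1:ℝ) / 4) ^ (k + 1) = (1 / 4) ^ k / 4 := by rw [pow_succ]; ring
        have : N + (k + 1) = N + k + 1 := by omega
        rw [this, h3]
        linarith
    have hgeo : Filter.Tendsto (fun k => (s N - 1) * (1 / 4) ^ k) Filter.atTop (nhds 0) := by
      have := (tendsto_pow_atTop_nhds_zero_of_lt_one
        (show (0:ℝ) ≤ 1/4 by norm_num) (by norm_num)).const_mul (s N - 1)
      simpa using this
    obtain ⟨K, hK⟩ := Filter.eventually_atTop.mp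
      (hgeo.eventually_lt_const (show (0:ℝ) < ε / 3 by linarith))
    refine ⟨N + K, fun n hn => ?_⟩
    set k := n - N with hk
    have hnk : n = N + k := by omega
    have hKk : K ≤ k := by omega
    have hmono : ((1:ℝ)/4) ^ k ≤ (1/4) ^ K :=
      pow_le_pow_of_le_one (by norm_num) (by norm_num) hKk
    have hsN : 0 ≤ s N - 1 := by linarith [hs N]
    have h4 : (s N - 1) * (1/4) ^ k ≤ (s N - 1) * (1/4) ^ K :=
      mul_le_mul_of_nonneg_left hmono hsN
    have h5 : (s N - 1) * (1/4) ^ K < ε / 3 := hK K le_rfl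
    have h6 : s n - 1 ≤ (s N - 1) * (1/4) ^ k + ε / 3 := by
      rw [hnk]; exact claim k
    have h7 : 0 ≤ s n - 1 := by linarith [hs n]
    rw [Real.dist_eq, sub_zero, abs_of_nonneg h7]
    linarith
  have := hconv.add (tendsto_const_nhds (x := (1:ℝ)))
  simpa using this
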